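/- arXiv:2508.08247 — 6 statements merged into one kernel-verified Lean document; each statement's English description precedes it below -/
import Mathlib

section
/- For any continuous antisymmetric function f : K × K → ℝ on a compact set K ⊂ ℝ^N and any ε > 0, there exist M ∈ ℕ, a continuous map φ : K → ℝ^M, and a skew-symmetric M × M real matrix A such that sup_{x,y ∈ K} |f(x,y) - φ(y)ᵀ A φ(x)| < ε. -/
/-!
By Stone–Weierstrass, the subalgebra of `C(K × K, ℝ)` generated by functions of `x` alone and
of `y` alone is dense, and its elements are the finite sums `∑ aᵢ(x) bᵢ(y)`. Such a sum is
`φ(y)ᵀ B φ(x)` for the feature map `φ = (a, b)` and a block matrix `B`; replacing `B` by its skew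
part `(B - Bᵀ) / 2` antisymmetrizes the approximant, which then approximates the antisymmetric `f`
at least as well.
-/

open Matrix

namespace ContinuousMap

variable (X Y : Type*) [TopologicalSpace X] [TopologicalSpace Y]

/-- The image of `C(X, ℝ) ⊗ C(Y, ℝ)` in `C(X × Y, ℝ)`. -/
def productFunctions : Subalgebra ℝ C(X × Y, ℝ) :=
  (compRightAlgHom ℝ ℝ (fst : C(X × Y, X))).range ⊔
    (compRightAlgHom ℝ ℝ (snd : C(X × Y, Y))).range

variable {X Y}

theorem productFunctions_separatesPoints [T35Space X] [T35Space Y] :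
    (productFunctions X Y).SeparatesPoints := by
  rintro ⟨x₁, y₁⟩ ⟨x₂, y₂⟩ hne
  by_cases hx : x₁ = x₂
  · have hy : y₁ ≠ y₂ := fun hy ↦ hne (by rw [hx, hy])
    obtain ⟨g, hg, hgy⟩ := separatesPoints_continuous_of_t35Space hy
    exact ⟨_, ⟨_, Algebra.mem_sup_right ⟨⟨g, hg⟩, rfl⟩, rfl⟩, hgy⟩
  · obtain ⟨g, hg, hgx⟩ := separatesPoints_continuous_of_t35Space hx
    exact ⟨_, ⟨_, Algebra.mem_sup_left ⟨⟨g, hg⟩, rfl⟩, rfl⟩, hgx⟩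

theorem exists_sum_mul_of_mem_productFunctions {F : C(X × Y, ℝ)}
    (hF : F ∈ productFunctions X Y) :
    ∃ (n : ℕ) (a : Fin n → C(X, ℝ)) (b : Fin n → C(Y, ℝ)),
      ∀ x y, F (x, y) = ∑ i, a i x * b i y := by
  rw [productFunctions, ← Subalgebra.mem_toSubmodule, ← Subalgebra.mul_toSubmodule,
    Submodule.mul_eq_span_mul_set, Submodule.mem_span_set'] at hF
  obtain ⟨n, c, p, rfl⟩ := hF
  choose a ha b hb hab using fun i ↦ Set.mem_mul.mp (p i).2
  choose a' ha' using ha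
  choose b' hb' using hb
  refine ⟨n, fun i ↦ c i • a' i, b', fun x y ↦ ?_⟩
  simp only [coe_sum, Finset.sum_apply]
  refine Finset.sum_congr rfl fun i _ ↦ ?_
  simp [← hab i, ← ha' i, ← hb' i, mul_assoc]

theorem exists_sum_mul_near [CompactSpace X] [CompactSpace Y] [T2Space X] [T2Space Y]
    (f : C(X × Y, ℝ)) {ε : ℝ} (hε : 0 < ε) :
    ∃ (n : ℕ) (a : Fin n → C(X, ℝ)) (b : Fin n → C(Y, ℝ)),
      ∀ x y, |f (x, y) - ∑ i, a i x * b i y| < ε := by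
  obtain ⟨⟨F, hF⟩, hfF⟩ := exists_mem_subalgebra_near_continuousMap_of_separatesPoints _
    productFunctions_separatesPoints f ε hε
  obtain ⟨n, a, b, hab⟩ := exists_sum_mul_of_mem_productFunctions hF
  refine ⟨n, a, b, fun x y ↦ ?_⟩
  rw [← hab, abs_sub_comm]
  exact (norm_coe_le_norm _ (x, y)).trans_lt hfF

end ContinuousMap

theorem exists_continuous_dotProduct_mulVec_eq_sum_mul {X R : Type*} [TopologicalSpace X]
    [CommSemiring R] [TopologicalSpace R] {n : ℕ} (a b : Fin n → C(X, R)) :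
    ∃ (φ : X → Fin (n + n) → R) (B : Matrix (Fin (n + n)) (Fin (n + n)) R),
      Continuous φ ∧ ∀ x y, φ y ⬝ᵥ (B *ᵥ φ x) = ∑ i, a i x * b i y := by
  let e := finSumFinEquiv (m := n) (n := n)
  refine ⟨fun x ↦ Sum.elim (a · x) (b · x) ∘ e.symm, reindex e e (fromBlocks 0 0 1 0), ?_, ?_⟩
  · refine continuous_pi fun j ↦ ?_
    simp only [Function.comp_apply]
    rcases e.symm j with i | i
    exacts [(a i).continuous, (b i).continuous]
  · intro x y
    rw [reindex_apply, submatrix_mulVec_equiv, Equiv.symm_symm, Function.comp_assoc,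
      Equiv.symm_comp_self, Function.comp_id, comp_equiv_dotProduct_comp_equiv, fromBlocks_mulVec]
    simp [dotProduct, mul_comm]

theorem transpose_smul_sub_transpose {ι R : Type*} [Ring R] (c : R) (B : Matrix ι ι R) :
    (c • (B - Bᵀ))ᵀ = -(c • (B - Bᵀ)) := by
  rw [transpose_smul, transpose_sub, transpose_transpose, ← smul_neg, neg_sub]

theorem abs_sub_dotProduct_skew_mulVec_lt {X ι : Type*} [Fintype ι] {f : X × X → ℝ}
    (hanti : ∀ x y, f (y, x) = -f (x, y)) (φ : X → ι → ℝ) (B : Matrix ι ι ℝ) {ε : ℝ}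
    (hB : ∀ x y, |f (x, y) - φ y ⬝ᵥ (B *ᵥ φ x)| < ε) (x y : X) :
    |f (x, y) - φ y ⬝ᵥ (((2⁻¹ : ℝ) • (B - Bᵀ)) *ᵥ φ x)| < ε := by
  have hxy := abs_lt.mp (hB x y)
  have hyx := abs_lt.mp (hB y x)
  rw [hanti] at hyx
  rw [smul_mulVec, dotProduct_smul, sub_mulVec, dotProduct_sub, dotProduct_transpose_mulVec,
    smul_eq_mul, abs_lt]
  constructor <;> linarith [hxy.1, hxy.2, hyx.1, hyx.2]

/-- Any continuous antisymmetric `f : K × K → ℝ` on a compact `K ⊆ ℝ^N`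
can be uniformly approximated to accuracy `ε` by an antisymmetric quadratic form
`φ(y)ᵀ A φ(x)` with `φ : K → ℝ^M` continuous and `A` skew-symmetric. -/
theorem stmt_1 {N : ℕ} (K : Set (EuclideanSpace ℝ (Fin N))) (hK : IsCompact K)
    (f : K × K → ℝ) (hf : Continuous f)
    (hanti : ∀ x y : K, f (y, x) = - f (x, y))
    (ε : ℝ) (hε : 0 < ε) :
    ∃ (M : ℕ) (φ : K → (Fin M → ℝ)) (A : Matrix (Fin M) (Fin M) ℝ),
      Continuous φ ∧ Aᵀ = -A ∧
      ∀ x y : K, |f (x, y) - φ y ⬝ᵥ (A *ᵥ φ x)| < ε := by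
  have : CompactSpace K := isCompact_iff_compactSpace.mp hK
  obtain ⟨n, a, b, hab⟩ := ContinuousMap.exists_sum_mul_near ⟨f, hf⟩ hε
  obtain ⟨φ, B, hφ, hB⟩ := exists_continuous_dotProduct_mulVec_eq_sum_mul a b
  refine ⟨n + n, φ, (2⁻¹ : ℝ) • (B - Bᵀ), hφ, transpose_smul_sub_transpose _ B,
    abs_sub_dotProduct_skew_mulVec_lt hanti φ B fun x y ↦ ?_⟩
  rw [hB]
  exact hab x y
end

section
/- Let p and q be two probability densities on a measurable space with p absolutely continuous w.r.t. q. Then the functional J(S) = E_p[log σ(S)] + E_q[log(1 - σ(S))], where σ(z) = 1/(1+e^{-z}), is maximized over measurable functions S by S*(x) = log(p(x)/q(x)), and at the optimum E_p[S*] equals the KL divergence D_KL(p‖q). -/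
open MeasureTheory

/-- The logistic sigmoid `σ(z) = 1/(1+e^{-z})`. -/
noncomputable def logistic (z : ℝ) : ℝ := 1 / (1 + Real.exp (-z))

/-- The binary cross-entropy (contrastive) objective
`J(S) = E_p[log σ(S)] + E_q[log(1 - σ(S))]` for densities `p, q` w.r.t. `μ`. -/
noncomputable def bceObjective {α : Type*} [MeasurableSpace α] (μ : Measure α)
    (p q : α → ℝ) (S : α → ℝ) : ℝ :=
  (∫ x, p x * Real.log (logistic (S x)) ∂μ)
    + ∫ x, q x * Real.log (1 - logistic (S x)) ∂μ

/-- The KL divergence between the densities `p` and `q` w.r.t. `μ`. -/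
noncomputable def klDivDensity {α : Type*} [MeasurableSpace α] (μ : Measure α)
    (p q : α → ℝ) : ℝ :=
  ∫ x, p x * Real.log (p x / q x) ∂μ

/-! At every point the integrand of `J` is `a log t + b log (1 - t)` with `a = p x`, `b = q x`,
`t = σ(S x)`, and by the binary Gibbs inequality this is maximised at `t = a / (a + b)`, which is
exactly `σ(log (a / b))`. Integrating the pointwise inequality gives the claim; the optimal
integrands are nonpositive and dominate an integrable function, so they are integrable. -/

section Logistic

open Real

lemma logistic_pos (z : ℝ) : 0 < logistic z := by
  unfold logistic; positivity

lemma logistic_lt_one (z : ℝ) : logistic z < 1 := by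
  rw [logistic, div_lt_one (by positivity)]
  linarith [exp_pos (-z)]

lemma measurable_logistic : Measurable logistic := by
  unfold logistic; fun_prop

lemma logistic_log_div {a b : ℝ} (ha : 0 < a) (hb : 0 < b) :
    logistic (log (a / b)) = a / (a + b) := by
  rw [logistic, exp_neg, exp_log (div_pos ha hb)]
  field_simp

lemma one_sub_logistic_log_div {a b : ℝ} (ha : 0 < a) (hb : 0 < b) :
    1 - logistic (log (a / b)) = b / (a + b) := by
  rw [logistic_log_div ha hb]
  field_simp
  ring

lemma mul_log_logistic_nonpos {a : ℝ} (ha : 0 ≤ a) (z : ℝ) : a * log (logistic z) ≤ 0 :=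
  mul_nonpos_of_nonneg_of_nonpos ha
    (log_nonpos (logistic_pos z).le (logistic_lt_one z).le)

lemma mul_log_one_sub_logistic_nonpos {a : ℝ} (ha : 0 ≤ a) (z : ℝ) :
    a * log (1 - logistic z) ≤ 0 :=
  mul_nonpos_of_nonneg_of_nonpos ha
    (log_nonpos (by linarith [logistic_lt_one z]) (by linarith [logistic_pos z]))

end Logistic

section Gibbs

open Real

lemma mul_log_le_mul_log_div_add_sub {x y c : ℝ} (hx : 0 ≤ x) (hy : 0 < y) (hc : 0 < c) :
    x * log y ≤ x * log (x / c) + c * y - x := by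
  rcases hx.eq_or_lt with rfl | hx
  · simp only [zero_mul, zero_add, sub_zero]
    positivity
  have hlog : log y - log (x / c) = log (c * y / x) := by
    rw [log_div (by positivity) hx.ne', log_mul hc.ne' hy.ne', log_div hx.ne' hc.ne']
    ring
  have hle : x * log (c * y / x) ≤ x * (c * y / x - 1) :=
    mul_le_mul_of_nonneg_left (log_le_sub_one_of_pos (by positivity)) hx.le
  rw [mul_sub, mul_div_cancel₀ _ hx.ne', mul_one, ← hlog, mul_sub] at hle
  linarith

/-- Gibbs' inequality for two-point distributions, with unnormalised weights `a, b`. -/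
lemma mul_log_add_mul_log_one_sub_le {a b t : ℝ} (ha : 0 ≤ a) (hb : 0 ≤ b)
    (ht₀ : 0 < t) (ht₁ : t < 1) :
    a * log t + b * log (1 - t) ≤ a * log (a / (a + b)) + b * log (b / (a + b)) := by
  rcases (add_nonneg ha hb).eq_or_lt with hab | hab
  · obtain ⟨rfl, rfl⟩ : a = 0 ∧ b = 0 := ⟨by linarith, by linarith⟩
    simp
  have h₁ := mul_log_le_mul_log_div_add_sub ha ht₀ hab
  have h₂ := mul_log_le_mul_log_div_add_sub hb (sub_pos.mpr ht₁) hab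
  linarith

/-- The hypotheses `a = 0 ↔ b = 0` rule out the points where `log (a / b)` takes the junk value
`log 0 = 0`. -/
lemma mul_log_logistic_add_mul_log_one_sub_logistic_le {a b : ℝ} (ha : 0 ≤ a) (hb : 0 ≤ b)
    (hba : b = 0 → a = 0) (hab : a = 0 → b = 0) (z : ℝ) :
    a * log (logistic z) + b * log (1 - logistic z)
      ≤ a * log (logistic (log (a / b))) + b * log (1 - logistic (log (a / b))) := by
  rcases ha.eq_or_lt with ha' | ha'
  · simp [← ha', hab ha'.symm]
  have hb' : 0 < b := hb.lt_of_ne fun h => ha'.ne' (hba h.symm)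
  rw [one_sub_logistic_log_div ha' hb', logistic_log_div ha' hb']
  exact mul_log_add_mul_log_one_sub_le ha hb (logistic_pos z) (logistic_lt_one z)

end Gibbs

lemma integral_le_integral_add_of_le_add_of_nonpos {α : Type*} [MeasurableSpace α]
    {μ : Measure α} {f g₁ g₂ : α → ℝ} (hf : Integrable f μ)
    (hg₁ : AEStronglyMeasurable g₁ μ) (hg₂ : AEStronglyMeasurable g₂ μ)
    (hle : ∀ᵐ x ∂μ, f x ≤ g₁ x + g₂ x) (hg₁0 : ∀ᵐ x ∂μ, g₁ x ≤ 0) (hg₂0 : ∀ᵐ x ∂μ, g₂ x ≤ 0) :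
    ∫ x, f x ∂μ ≤ (∫ x, g₁ x ∂μ) + ∫ x, g₂ x ∂μ := by
  have hi₁ : Integrable g₁ μ := by
    refine integrable_of_le_of_le hg₁ ?_ hg₁0 hf (integrable_zero α ℝ μ)
    filter_upwards [hle, hg₂0] with x h h₂
    linarith
  have hi₂ : Integrable g₂ μ := by
    refine integrable_of_le_of_le hg₂ ?_ hg₂0 hf (integrable_zero α ℝ μ)
    filter_upwards [hle, hg₁0] with x h h₁
    linarith
  rw [← integral_add hi₁ hi₂]
  exact integral_mono_ae hf (hi₁.add hi₂) hle

theorem stmt_7_general {α : Type*} [MeasurableSpace α] (μ : Measure α)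
    (p q : α → ℝ) (hp : Measurable p) (hq : Measurable q)
    (hp0 : ∀ x, 0 ≤ p x) (hq0 : ∀ x, 0 ≤ q x)
    (hac : ∀ᵐ x ∂μ, q x = 0 → p x = 0)
    (hac' : ∀ᵐ x ∂μ, p x = 0 → q x = 0) :
    (∀ S : α → ℝ, Measurable S →
        Integrable (fun x => p x * Real.log (logistic (S x))) μ →
        Integrable (fun x => q x * Real.log (1 - logistic (S x))) μ →
        bceObjective μ p q S ≤ bceObjective μ p q (fun x => Real.log (p x / q x)))
    ∧ (∫ x, p x * Real.log (p x / q x) ∂μ) = klDivDensity μ p q := by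
  refine ⟨fun S _ hI₁ hI₂ => ?_, rfl⟩
  have hSstar : Measurable fun x => logistic (Real.log (p x / q x)) :=
    measurable_logistic.comp (Real.measurable_log.comp (hp.div hq))
  unfold bceObjective
  rw [← integral_add hI₁ hI₂]
  refine integral_le_integral_add_of_le_add_of_nonpos (hI₁.add hI₂)
    (hp.mul (Real.measurable_log.comp hSstar)).aestronglyMeasurable
    (hq.mul (Real.measurable_log.comp (measurable_const.sub hSstar))).aestronglyMeasurable
    ?_ (.of_forall fun x => mul_log_logistic_nonpos (hp0 x) _)
    (.of_forall fun x => mul_log_one_sub_logistic_nonpos (hq0 x) _)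
  filter_upwards [hac, hac'] with x hqp hpq
  exact mul_log_logistic_add_mul_log_one_sub_logistic_le (hp0 x) (hq0 x) hqp hpq (S x)

/-- For probability densities `p ≪ q` (and `q ≪ p`), the objective
`J(S) = E_p[log σ(S)] + E_q[log(1-σ(S))]` is maximized over measurable `S` by the
log-density-ratio `S* = log(p/q)`, and `E_p[S*]` is the KL divergence `D_KL(p‖q)`. -/
theorem stmt_7 {α : Type*} [MeasurableSpace α] (μ : Measure α)
    (p q : α → ℝ) (hp : Measurable p) (hq : Measurable q)
    (hp0 : ∀ x, 0 ≤ p x) (hq0 : ∀ x, 0 ≤ q x)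
    (hpnorm : ∫ x, p x ∂μ = 1) (hqnorm : ∫ x, q x ∂μ = 1)
    (hac : ∀ᵐ x ∂μ, q x = 0 → p x = 0)
    (hac' : ∀ᵐ x ∂μ, p x = 0 → q x = 0) :
    (∀ S : α → ℝ, Measurable S →
        Integrable (fun x => p x * Real.log (logistic (S x))) μ →
        Integrable (fun x => q x * Real.log (1 - logistic (S x))) μ →
        bceObjective μ p q S ≤ bceObjective μ p q (fun x => Real.log (p x / q x)))
    ∧ (∫ x, p x * Real.log (p x / q x) ∂μ) = klDivDensity μ p q :=
  stmt_7_general μ p q hp hq hp0 hq0 hac hac'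
end

section
/- For any two probability measures p and q with p absolutely continuous w.r.t. q, and any bounded measurable function T, the KL divergence satisfies D_KL(p‖q) ≥ E_p[T] - E_q[e^T] + 1, with equality when T = log(dp/dq). -/
open MeasureTheory

/-- Fenchel–Young for `r log r - r` and its convex conjugate `exp`; for `r > 0` it is
`t - log r + 1 ≤ exp (t - log r)` multiplied by `r`. -/
lemma Real.mul_sub_mul_log_le_exp_sub {r : ℝ} (hr : 0 ≤ r) (t : ℝ) :
    r * t - r * Real.log r ≤ Real.exp t - r := by
  rcases hr.eq_or_lt with rfl | hr
  · simp [(Real.exp_pos t).le]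
  · have h := mul_le_mul_of_nonneg_left (Real.add_one_le_exp (t - Real.log r)) hr.le
    rw [Real.exp_sub, Real.exp_log hr, mul_div_cancel₀ _ hr.ne'] at h
    linarith

section RnDeriv

variable {α : Type*} [MeasurableSpace α] {μ ν : Measure α} [IsFiniteMeasure μ] [SigmaFinite ν]

/-- Both integrals against `μ` are rewritten as integrals against `ν` with density
`r = dμ/dν`, where the Fenchel–Young inequality applies pointwise. -/
theorem integral_sub_integral_exp_add_le_integral_log_rnDeriv (hμν : μ ≪ ν)
    (hlog : Integrable (fun x => Real.log (μ.rnDeriv ν x).toReal) μ)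
    {T : α → ℝ} (hT : Integrable T μ) (hexpT : Integrable (fun x => Real.exp (T x)) ν) :
    ∫ x, T x ∂μ - ∫ x, Real.exp (T x) ∂ν + μ.real Set.univ
      ≤ ∫ x, Real.log (μ.rnDeriv ν x).toReal ∂μ := by
  set r : α → ℝ := fun x => (μ.rnDeriv ν x).toReal
  have hr : Integrable r ν := Measure.integrable_toReal_rnDeriv
  have hrT : Integrable (fun x => r x * T x) ν := (integrable_rnDeriv_smul_iff hμν).2 hT
  have hrlog : Integrable (fun x => r x * Real.log (r x)) ν :=
    (integrable_rnDeriv_smul_iff hμν).2 hlog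
  have key : ∫ x, (r x * T x - r x * Real.log (r x)) ∂ν ≤ ∫ x, (Real.exp (T x) - r x) ∂ν :=
    integral_mono (hrT.sub hrlog) (hexpT.sub hr) fun x =>
      Real.mul_sub_mul_log_le_exp_sub ENNReal.toReal_nonneg (T x)
  rw [integral_sub hrT hrlog, integral_sub hexpT hr, Measure.integral_toReal_rnDeriv hμν] at key
  have hTeq : ∫ x, r x * T x ∂ν = ∫ x, T x ∂μ := integral_rnDeriv_smul hμν
  have hlogeq : ∫ x, r x * Real.log (r x) ∂ν = ∫ x, Real.log (r x) ∂μ :=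
    integral_rnDeriv_smul hμν
  linarith

theorem integral_exp_log_rnDeriv (hμν : μ ≪ ν) (hνμ : ν ≪ μ) :
    ∫ x, Real.exp (Real.log (μ.rnDeriv ν x).toReal) ∂ν = μ.real Set.univ := by
  rw [← Measure.integral_toReal_rnDeriv hμν]
  refine integral_congr_ae ?_
  filter_upwards [hνμ.ae_le (Measure.rnDeriv_pos hμν), Measure.rnDeriv_lt_top μ ν]
    with x hpos hlt
  exact Real.exp_log (ENNReal.toReal_pos hpos.ne' hlt.ne)

end RnDeriv

/-- Donsker–Varadhan-type bound: For probability measures `p ≪ q` with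
integrable log-likelihood ratio, and any bounded measurable `T`,
`D_KL(p‖q) ≥ E_p[T] - E_q[e^T] + 1`, with equality when `T = log (dp/dq)`
(which requires also `q ≪ p` for the exponential term to integrate to `1`). -/
theorem stmt_8 {α : Type*} [MeasurableSpace α] (p q : Measure α)
    [IsProbabilityMeasure p] [IsProbabilityMeasure q]
    (hac : p ≪ q)
    (hint : Integrable (fun x => Real.log ((p.rnDeriv q x).toReal)) p) :
    (∀ T : α → ℝ, Measurable T → (∃ Cb : ℝ, ∀ x, |T x| ≤ Cb) →
        (∫ x, T x ∂p) - (∫ x, Real.exp (T x) ∂q) + 1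
          ≤ ∫ x, Real.log ((p.rnDeriv q x).toReal) ∂p)
    ∧ (q ≪ p →
        (∫ x, Real.log ((p.rnDeriv q x).toReal) ∂p)
          = (∫ x, Real.log ((p.rnDeriv q x).toReal) ∂p)
            - (∫ x, Real.exp (Real.log ((p.rnDeriv q x).toReal)) ∂q) + 1) := by
  refine ⟨fun T hT ⟨C, hC⟩ => ?_, fun hqp => ?_⟩
  · have hTp : Integrable T p := .of_bound hT.aestronglyMeasurable C (ae_of_all _ hC)
    have hexpT : Integrable (fun x => Real.exp (T x)) q :=
      .of_bound (by fun_prop) (Real.exp C) (ae_of_all _ fun x => by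
        rw [Real.norm_eq_abs, Real.abs_exp]
        exact Real.exp_le_exp.2 (abs_le.1 (hC x)).2)
    simpa using integral_sub_integral_exp_add_le_integral_log_rnDeriv hac hint hTp hexpT
  · rw [integral_exp_log_rnDeriv hac hqp]
    simp
end

section
/- Let G, D, C be as in the Lyapunov setting with D, C symmetric positive definite and GC + CGᵀ = -2D. Then the entropy production rate Ṡ = Tr(Λᵀ D Λ C) with Λ = D⁻¹G + C⁻¹ is nonnegative, and Ṡ = 0 if and only if DC⁻¹ = -G (i.e., the dynamics are reversible / the steady-state probability current vanishes). -/
/-!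
Since `Λ = D⁻¹(G + DC⁻¹)`, the entropy production is `Ṡ = Tr(Mᵀ D⁻¹ M C)` with `M = G + DC⁻¹`.
Writing `D⁻¹ = PᵀP` and `C = QQᵀ` with `P, Q` invertible turns this into the squared Frobenius
norm of `PMQ`, which is nonnegative and vanishes exactly when `M = 0`.
-/

open Matrix

namespace Matrix

open scoped MatrixOrder ComplexOrder

lemma trace_conjTranspose_mul_mul_mul_eq_trace_conjTranspose_mul_self
    {k l m n R : Type*} [Fintype l] [Fintype m] [Fintype n] [Fintype k]
    [CommSemiring R] [StarRing R]
    (M : Matrix m n R) (P : Matrix k m R) (Q : Matrix n l R) :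
    trace (Mᴴ * (Pᴴ * P) * M * (Q * Qᴴ)) = trace ((P * M * Q)ᴴ * (P * M * Q)) := by
  simp only [conjTranspose_mul, Matrix.mul_assoc]
  rw [trace_mul_comm Qᴴ]
  simp only [Matrix.mul_assoc]

variable {n 𝕜 : Type*} [Fintype n] [DecidableEq n] [RCLike 𝕜] {A B : Matrix n n 𝕜}

lemma PosSemidef.trace_conjTranspose_mul_mul_mul_nonneg (hA : A.PosSemidef) (hB : B.PosSemidef)
    (M : Matrix n n 𝕜) : 0 ≤ trace (Mᴴ * A * M * B) := by
  obtain ⟨P, rfl⟩ := CStarAlgebra.nonneg_iff_eq_star_mul_self.mp hA.nonneg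
  obtain ⟨Q, rfl⟩ := CStarAlgebra.nonneg_iff_eq_star_mul_self.mp hB.nonneg
  rw [star_eq_conjTranspose, star_eq_conjTranspose, ← conjTranspose_conjTranspose Q,
    conjTranspose_conjTranspose Qᴴ, trace_conjTranspose_mul_mul_mul_eq_trace_conjTranspose_mul_self]
  exact (posSemidef_conjTranspose_mul_self _).trace_nonneg

lemma PosDef.trace_conjTranspose_mul_mul_mul_eq_zero_iff (hA : A.PosDef) (hB : B.PosDef)
    {M : Matrix n n 𝕜} : trace (Mᴴ * A * M * B) = 0 ↔ M = 0 := by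
  obtain ⟨P, hP, rfl⟩ :=
    CStarAlgebra.isStrictlyPositive_iff_eq_star_mul_self.mp hA.isStrictlyPositive
  obtain ⟨Q, hQ, rfl⟩ :=
    CStarAlgebra.isStrictlyPositive_iff_eq_star_mul_self.mp hB.isStrictlyPositive
  rw [star_eq_conjTranspose, star_eq_conjTranspose, ← conjTranspose_conjTranspose Q,
    conjTranspose_conjTranspose Qᴴ, trace_conjTranspose_mul_mul_mul_eq_trace_conjTranspose_mul_self,
    trace_conjTranspose_mul_self_eq_zero_iff, (show IsUnit Qᴴ from hQ.star).mul_left_eq_zero,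
    hP.mul_right_eq_zero]

end Matrix

theorem stmt_11_general {N : ℕ} (G D C : Matrix (Fin N) (Fin N) ℝ)
    (hD : D.PosDef) (hC : C.PosDef) :
    0 ≤ trace ((D⁻¹ * G + C⁻¹)ᵀ * D * (D⁻¹ * G + C⁻¹) * C)
    ∧ (trace ((D⁻¹ * G + C⁻¹)ᵀ * D * (D⁻¹ * G + C⁻¹) * C) = 0 ↔ D * C⁻¹ = -G) := by
  have hDdet : IsUnit D.det := (isUnit_iff_isUnit_det D).mp hD.isUnit
  set M := G + D * C⁻¹
  have hΛ : D⁻¹ * G + C⁻¹ = D⁻¹ * M := by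
    rw [mul_add, nonsing_inv_mul_cancel_left _ _ hDdet]
  have hEntropy : trace ((D⁻¹ * G + C⁻¹)ᵀ * D * (D⁻¹ * G + C⁻¹) * C)
      = trace (Mᴴ * D⁻¹ * M * C) := by
    rw [hΛ, transpose_mul, ← conjTranspose_eq_transpose_of_trivial,
      ← conjTranspose_eq_transpose_of_trivial, hD.inv.isHermitian.eq, Matrix.mul_assoc Mᴴ,
      nonsing_inv_mul D hDdet, mul_one, ← Matrix.mul_assoc]
  rw [hEntropy, hD.inv.trace_conjTranspose_mul_mul_mul_eq_zero_iff hC, add_eq_zero_iff_eq_neg']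
  exact ⟨hD.inv.posSemidef.trace_conjTranspose_mul_mul_mul_nonneg hC.posSemidef M, Iff.rfl⟩

/-- With `D, C` symmetric positive definite and `GC + CGᵀ = -2D`,
the entropy production rate `Ṡ = Tr(ΛᵀDΛC)`, `Λ = D⁻¹G + C⁻¹`, is nonnegative,
and vanishes iff `DC⁻¹ = -G` (reversible dynamics). -/
theorem stmt_11 {N : ℕ} (G D C : Matrix (Fin N) (Fin N) ℝ)
    (hD : D.PosDef) (hC : C.PosDef)
    (hLyap : G * C + C * Gᵀ = -((2 : ℝ) • D)) :
    0 ≤ trace ((D⁻¹ * G + C⁻¹)ᵀ * D * (D⁻¹ * G + C⁻¹) * C)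
    ∧ (trace ((D⁻¹ * G + C⁻¹)ᵀ * D * (D⁻¹ * G + C⁻¹) * C) = 0 ↔ D * C⁻¹ = -G) :=
  stmt_11_general G D C hD hC
end

section
/- The stationary density ρ(x) = (1/Z) e^{(hx-U(x))/D} ∫_x^{x+L} e^{-(hy-U(y))/D} dy, with constant current J = D(1 - e^{-hL/D})/Z, satisfies the stationary Fokker–Planck relation (h - U'(x))ρ(x) - D ρ'(x) = J for all x. -/
open intervalIntegral

/-- The stationary density of a driven overdamped particle in an `L`-periodic potential. -/
noncomputable def periodicDensity (U : ℝ → ℝ) (L h D Z : ℝ) (x : ℝ) : ℝ :=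
  (1 / Z) * Real.exp ((h * x - U x) / D)
    * ∫ y in x..(x + L), Real.exp (-(h * y - U y) / D)

/-! Writing `ρ = e^{(hx-U)/D} W / Z` with the window integral `W x = ∫_x^{x+L} e^{-(hy-U)/D} dy`,
one has `W' x = e^{-(h(x+L)-U(x+L))/D} - e^{-(hx-U x)/D}`, and periodicity of `U` turns
`e^{(hx-U x)/D} W' x` into the constant `e^{-hL/D} - 1`. Hence
`ρ' = (h - U') ρ / D - (1 - e^{-hL/D}) / Z`, which is the Fokker–Planck relation for any `Z`. -/

theorem Continuous.hasDerivAt_integral_self_add {E : Type*} [NormedAddCommGroup E]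
    [NormedSpace ℝ E] [CompleteSpace E] {f : ℝ → E} (hf : Continuous f) (L x : ℝ) :
    HasDerivAt (fun u => ∫ y in u..u + L, f y) (f (x + L) - f x) x := by
  have hright : HasDerivAt (fun u => ∫ y in (0 : ℝ)..u + L, f y) (f (x + L)) x :=
    (hf.integral_hasStrictDerivAt 0 (x + L)).hasDerivAt.comp_add_const x L
  have hleft : HasDerivAt (fun u => ∫ y in (0 : ℝ)..u, f y) (f x) x :=
    (hf.integral_hasStrictDerivAt 0 x).hasDerivAt
  convert hright.sub hleft using 1
  funext u
  exact (integral_interval_sub_left (hf.intervalIntegrable _ _) (hf.intervalIntegrable _ _)).symm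

theorem hasDerivAt_periodicDensity {U : ℝ → ℝ} (hU : Differentiable ℝ U) {L : ℝ}
    (hper : ∀ x, U (x + L) = U x) (h D Z x : ℝ) :
    HasDerivAt (periodicDensity U L h D Z)
      ((h - deriv U x) / D * periodicDensity U L h D Z x
        - (1 - Real.exp (-(h * L) / D)) / Z) x := by
  set E : ℝ → ℝ := fun u => Real.exp ((h * u - U u) / D)
  set f : ℝ → ℝ := fun y => Real.exp (-(h * y - U y) / D)
  have hf : Continuous f := by
    have := hU.continuous
    fun_prop
  have hE : HasDerivAt E (E x * ((h - deriv U x) / D)) x := by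
    have := (((hasDerivAt_id x).const_mul h).sub (hU x).hasDerivAt).div_const D
    simpa using this.exp
  have hEf : E x * f x = 1 := by
    rw [← Real.exp_add, ← Real.exp_zero]
    ring_nf
  have hEf_shift : E x * f (x + L) = Real.exp (-(h * L) / D) := by
    simp only [E, f, ← Real.exp_add, hper]
    ring_nf
  refine ((hE.const_mul (1 / Z)).mul (hf.hasDerivAt_integral_self_add L x)).congr_deriv ?_
  simp only [periodicDensity]
  linear_combination (1 / Z) * hEf_shift - (1 / Z) * hEf

theorem periodicDensity_fokkerPlanck {U : ℝ → ℝ} (hU : Differentiable ℝ U) {L h D : ℝ}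
    (hD : D ≠ 0) (hper : ∀ x, U (x + L) = U x) (Z x : ℝ) :
    (h - deriv U x) * periodicDensity U L h D Z x - D * deriv (periodicDensity U L h D Z) x
      = D * (1 - Real.exp (-(h * L) / D)) / Z := by
  rw [(hasDerivAt_periodicDensity hU hper h D Z x).deriv]
  field_simp
  ring

theorem stmt_15_general (U : ℝ → ℝ) (hU : ContDiff ℝ 1 U) (L h D : ℝ)
    (hD : 0 < D)
    (hper : ∀ x, U (x + L) = U x) :
    ∀ x : ℝ,
      (h - deriv U x) * periodicDensity U L h D
          (∫ z in (0:ℝ)..L, Real.exp ((h * z - U z) / D)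
            * ∫ y in z..(z + L), Real.exp (-(h * y - U y) / D)) x
        - D * deriv (periodicDensity U L h D
            (∫ z in (0:ℝ)..L, Real.exp ((h * z - U z) / D)
              * ∫ y in z..(z + L), Real.exp (-(h * y - U y) / D))) x
      = D * (1 - Real.exp (-(h * L) / D))
          / (∫ z in (0:ℝ)..L, Real.exp ((h * z - U z) / D)
              * ∫ y in z..(z + L), Real.exp (-(h * y - U y) / D)) :=
  periodicDensity_fokkerPlanck (hU.differentiable one_ne_zero) hD.ne' hper _

/-- The stationary density
`ρ(x) = (1/Z) e^{(hx-U(x))/D} ∫_x^{x+L} e^{-(hy-U(y))/D} dy`, with normalization `Z`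
and constant current `J = D(1 - e^{-hL/D})/Z`, satisfies the stationary Fokker–Planck
relation `(h - U'(x)) ρ(x) - D ρ'(x) = J` for all `x`. -/
theorem stmt_15 (U : ℝ → ℝ) (hU : ContDiff ℝ 1 U) (L h D : ℝ)
    (hL : 0 < L) (hh : 0 < h) (hD : 0 < D)
    (hper : ∀ x, U (x + L) = U x) :
    ∀ x : ℝ,
      (h - deriv U x) * periodicDensity U L h D
          (∫ z in (0:ℝ)..L, Real.exp ((h * z - U z) / D)
            * ∫ y in z..(z + L), Real.exp (-(h * y - U y) / D)) x
        - D * deriv (periodicDensity U L h D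
            (∫ z in (0:ℝ)..L, Real.exp ((h * z - U z) / D)
              * ∫ y in z..(z + L), Real.exp (-(h * y - U y) / D))) x
      = D * (1 - Real.exp (-(h * L) / D))
          / (∫ z in (0:ℝ)..L, Real.exp ((h * z - U z) / D)
              * ∫ y in z..(z + L), Real.exp (-(h * y - U y) / D)) :=
  stmt_15_general U hU L h D hD hper
end

section
/- For the two-distribution objective with σ the logistic function, expanding to second order: if S is small, then E_p[log σ(S)] + E_q[log(1-σ(S))] = -2log 2 + (1/2)(E_p[S] - E_q[S]) - (1/8)(E_p[S²] + E_q[S²]) + O(S³); in particular when q is the pushforward of p under argument exchange and S is antisymmetric, this equals -2log 2 + E_p[S - S²/4] + O(S³). -/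
/-!
Since `1 + e^{-z} = 2 e^{-z/2} cosh (z/2)` and `1 - σ(z) = σ(-z)`, both `log σ(z)` and
`log (1 - σ(z))` equal `-log 2 ± z/2 - log cosh (z/2)`. The power series of `cosh` gives
`1 + x²/2 ≤ cosh x ≤ exp (x²/2)`, hence `|log cosh x - x²/2| ≤ x⁴/4` for every `x`. For bounded
`S` this integrates to an expansion of the objective whose remainder is `O(t⁴)` uniformly in `t`.
Under the exchange map, `E_q[S] = -E_p[S]` and `E_q[S²] = E_p[S²]`.
-/

open MeasureTheory Filter Topology Asymptotics

open Real

lemma one_add_exp_neg_eq_mul_cosh (z : ℝ) : 1 + exp (-z) = 2 * exp (-z / 2) * cosh (z / 2) := by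
  have hsq : exp (-z) = exp (-z / 2) * exp (-(z / 2)) := by rw [← exp_add]; ring_nf
  have hinv : exp (-z / 2) * exp (z / 2) = 1 := by rw [← exp_add]; ring_nf; exact exp_zero
  rw [cosh_eq, hsq]
  linear_combination -hinv

lemma log_logistic (z : ℝ) : log (logistic z) = -log 2 + z / 2 - log (cosh (z / 2)) := by
  rw [logistic, one_div, log_inv, one_add_exp_neg_eq_mul_cosh,
    log_mul (by positivity) (cosh_pos _).ne', log_mul two_ne_zero (exp_pos _).ne', log_exp]
  ring

lemma one_sub_logistic (z : ℝ) : 1 - logistic z = logistic (-z) := by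
  rw [logistic, logistic, neg_neg, exp_neg]
  field_simp
  ring

lemma log_one_sub_logistic (z : ℝ) :
    log (1 - logistic z) = -log 2 - z / 2 - log (cosh (z / 2)) := by
  rw [one_sub_logistic, log_logistic, neg_div, cosh_neg]
  ring

lemma one_add_sq_div_two_le_cosh (x : ℝ) : 1 + x ^ 2 / 2 ≤ cosh x := by
  have h := sum_le_hasSum (Finset.range 2) (fun n _ => ?_) (hasSum_cosh x)
  · simpa [Finset.sum_range_succ] using h
  · rw [pow_mul]; positivity

lemma log_cosh_le_sq_div_two (x : ℝ) : log (cosh x) ≤ x ^ 2 / 2 := by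
  simpa using log_le_log (cosh_pos x) (cosh_le_exp_half_sq x)

lemma sq_div_two_sub_le_log_cosh (x : ℝ) : x ^ 2 / 2 - x ^ 4 / 4 ≤ log (cosh x) := by
  set y := x ^ 2 / 2
  have hy : 0 ≤ y := by positivity
  have hgeom : (1 + y)⁻¹ ≤ 1 - y + y ^ 2 := by
    rw [inv_le_iff_one_le_mul₀ (by positivity)]
    nlinarith [pow_nonneg hy 3]
  calc x ^ 2 / 2 - x ^ 4 / 4 = 1 - (1 - y + y ^ 2) := by ring
    _ ≤ 1 - (1 + y)⁻¹ := by linarith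
    _ ≤ 1 - (cosh x)⁻¹ := by gcongr; exact one_add_sq_div_two_le_cosh x
    _ ≤ log (cosh x) := one_sub_inv_le_log_of_pos (cosh_pos x)

lemma abs_log_cosh_sub_sq_div_two_le (x : ℝ) : |log (cosh x) - x ^ 2 / 2| ≤ x ^ 4 / 4 :=
  abs_sub_le_iff.2
    ⟨by linarith [log_cosh_le_sq_div_two x, Even.pow_nonneg (by decide : Even 4) x],
      by linarith [sq_div_two_sub_le_log_cosh x]⟩

section Integrals

variable {α : Type*} [MeasurableSpace α] {μ : Measure α} {S : α → ℝ} {C : ℝ}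

lemma integrable_of_abs_le [IsFiniteMeasure μ] (hS : Measurable S) (hC : ∀ x, |S x| ≤ C) :
    Integrable S μ :=
  Integrable.of_bound hS.aestronglyMeasurable C (ae_of_all _ hC)

lemma integrable_sq_of_abs_le [IsFiniteMeasure μ] (hS : Measurable S) (hC : ∀ x, |S x| ≤ C) :
    Integrable (fun x => S x ^ 2) μ :=
  integrable_of_abs_le (hS.pow_const 2) fun x => by
    simpa only [abs_pow] using pow_le_pow_left₀ (abs_nonneg _) (hC x) 2

lemma integrable_log_cosh_mul_div_two (hS : Measurable S)
    (hS₂ : Integrable (fun x => S x ^ 2) μ) (t : ℝ) :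
    Integrable (fun x => log (cosh (t * S x / 2))) μ := by
  refine (hS₂.const_mul (t ^ 2 / 8)).mono'
    ((hS.const_mul t).div_const 2).cosh.log.aestronglyMeasurable (ae_of_all _ fun x => ?_)
  rw [norm_eq_abs, abs_of_nonneg (log_nonneg (one_le_cosh _))]
  linarith [log_cosh_le_sq_div_two (t * S x / 2)]

lemma integral_const_add_mul_sub [IsProbabilityMeasure μ] {f g : α → ℝ} (hf : Integrable f μ)
    (hg : Integrable g μ) (c a : ℝ) :
    ∫ x, (c + a * f x - g x) ∂μ = c + a * ∫ x, f x ∂μ - ∫ x, g x ∂μ := by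
  rw [integral_sub (f := fun x => c + a * f x) ((integrable_const c).add (hf.const_mul a)) hg,
    integral_add (integrable_const c) (hf.const_mul a), integral_const_mul]
  simp only [integral_const, probReal_univ, one_smul]

lemma integral_log_logistic_mul [IsProbabilityMeasure μ] (hS : Measurable S)
    (hC : ∀ x, |S x| ≤ C) (t : ℝ) :
    ∫ x, log (logistic (t * S x)) ∂μ
      = -log 2 + t / 2 * ∫ x, S x ∂μ - ∫ x, log (cosh (t * S x / 2)) ∂μ := by
  rw [← integral_const_add_mul_sub (integrable_of_abs_le hS hC)
    (integrable_log_cosh_mul_div_two hS (integrable_sq_of_abs_le hS hC) t)]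
  congr 1 with x
  rw [log_logistic]; ring

lemma integral_log_one_sub_logistic_mul [IsProbabilityMeasure μ] (hS : Measurable S)
    (hC : ∀ x, |S x| ≤ C) (t : ℝ) :
    ∫ x, log (1 - logistic (t * S x)) ∂μ
      = -log 2 - t / 2 * ∫ x, S x ∂μ - ∫ x, log (cosh (t * S x / 2)) ∂μ := by
  rw [sub_eq_add_neg (-log 2), ← neg_mul, ← integral_const_add_mul_sub
    (integrable_of_abs_le hS hC)
    (integrable_log_cosh_mul_div_two hS (integrable_sq_of_abs_le hS hC) t)]
  congr 1 with x
  rw [log_one_sub_logistic]; ring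

lemma isBigO_integral_log_cosh_mul_div_two [IsFiniteMeasure μ] (hS : Measurable S)
    (hC : ∀ x, |S x| ≤ C) (l : Filter ℝ) :
    (fun t => ∫ x, log (cosh (t * S x / 2)) ∂μ - t ^ 2 / 8 * ∫ x, S x ^ 2 ∂μ)
      =O[l] fun t => t ^ 4 := by
  have hS₂ := integrable_sq_of_abs_le (μ := μ) hS hC
  refine IsBigO.of_bound (C ^ 4 / 64 * μ.real Set.univ) (Eventually.of_forall fun t => ?_)
  have hpoint (x : α) :
      ‖log (cosh (t * S x / 2)) - t ^ 2 / 8 * S x ^ 2‖ ≤ C ^ 4 / 64 * t ^ 4 := by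
    have h₄ : S x ^ 4 ≤ C ^ 4 := by
      simpa only [Even.pow_abs (by decide : Even 4)] using
        pow_le_pow_left₀ (abs_nonneg _) (hC x) 4
    have h := abs_log_cosh_sub_sq_div_two_le (t * S x / 2)
    rw [norm_eq_abs]
    calc |log (cosh (t * S x / 2)) - t ^ 2 / 8 * S x ^ 2| ≤ t ^ 4 / 64 * S x ^ 4 := by
          convert h using 2 <;> ring
      _ ≤ C ^ 4 / 64 * t ^ 4 := by nlinarith [pow_nonneg (sq_nonneg t) 2]
  rw [← integral_const_mul, ← integral_sub (integrable_log_cosh_mul_div_two hS hS₂ t)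
    (hS₂.const_mul _)]
  refine (norm_integral_le_of_norm_le_const (ae_of_all _ hpoint)).trans_eq ?_
  rw [norm_pow, norm_eq_abs, Even.pow_abs (by decide)]
  ring

end Integrals

/-- Second-order expansion of the binary cross-entropy objective for a
small (scaled) logit `tS`:
`E_p[log σ(tS)] + E_q[log(1-σ(tS))]
  = -2 log 2 + (t/2)(E_p[S] - E_q[S]) - (t²/8)(E_p[S²] + E_q[S²]) + O(t³)`;
and when `q` is the pushforward of `p` under an exchange map under which `S` is
antisymmetric, this equals `-2 log 2 + E_p[tS - (tS)²/4] + O(t³)`. -/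
theorem stmt_19 {α : Type*} [MeasurableSpace α] (p q : Measure α)
    [IsProbabilityMeasure p] [IsProbabilityMeasure q]
    (S : α → ℝ) (hS : Measurable S) (hb : ∃ Cb : ℝ, ∀ x, |S x| ≤ Cb) :
    ((fun t : ℝ =>
        (∫ x, Real.log (logistic (t * S x)) ∂p)
          + (∫ x, Real.log (1 - logistic (t * S x)) ∂q)
          - (-(2 * Real.log 2)
              + t / 2 * ((∫ x, S x ∂p) - ∫ x, S x ∂q)
              - t ^ 2 / 8 * ((∫ x, (S x) ^ 2 ∂p) + ∫ x, (S x) ^ 2 ∂q)))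
      =O[𝓝 (0 : ℝ)] fun t => t ^ 3)
    ∧ (∀ e : α → α, Measurable e → q = p.map e → (∀ x, S (e x) = - S x) →
        (fun t : ℝ =>
            (∫ x, Real.log (logistic (t * S x)) ∂p)
              + (∫ x, Real.log (1 - logistic (t * S x)) ∂q)
              - (-(2 * Real.log 2)
                  + ∫ x, (t * S x - (t * S x) ^ 2 / 4) ∂p))
          =O[𝓝 (0 : ℝ)] fun t => t ^ 3) := by
  obtain ⟨C, hC⟩ := hb
  have hexpand : (fun t : ℝ =>
        (∫ x, log (logistic (t * S x)) ∂p) + (∫ x, log (1 - logistic (t * S x)) ∂q)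
          - (-(2 * log 2) + t / 2 * ((∫ x, S x ∂p) - ∫ x, S x ∂q)
              - t ^ 2 / 8 * ((∫ x, S x ^ 2 ∂p) + ∫ x, S x ^ 2 ∂q)))
      =O[𝓝 0] fun t => t ^ 3 := by
    refine (((isBigO_integral_log_cosh_mul_div_two (μ := p) hS hC _).add
      (isBigO_integral_log_cosh_mul_div_two (μ := q) hS hC _)).neg_left.trans
      (isLittleO_pow_pow (by norm_num : 3 < 4)).isBigO).congr_left fun t => ?_
    rw [integral_log_logistic_mul hS hC, integral_log_one_sub_logistic_mul hS hC]
    ring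
  refine ⟨hexpand, fun e he hqe hanti => hexpand.congr_left fun t => ?_⟩
  have hmean : ∫ x, S x ∂q = -∫ x, S x ∂p := by
    rw [hqe, integral_map he.aemeasurable hS.aestronglyMeasurable]
    simp only [hanti, integral_neg]
  have hsq : ∫ x, S x ^ 2 ∂q = ∫ x, S x ^ 2 ∂p := by
    rw [hqe, integral_map he.aemeasurable (hS.pow_const 2).aestronglyMeasurable]
    simp only [hanti, neg_sq]
  have hquad : ∫ x, (t * S x - (t * S x) ^ 2 / 4) ∂p
      = t * ∫ x, S x ∂p - t ^ 2 / 4 * ∫ x, S x ^ 2 ∂p := by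
    rw [← integral_const_mul (t ^ 2 / 4), ← zero_add (t * ∫ x, S x ∂p),
      ← integral_const_add_mul_sub (integrable_of_abs_le hS hC)
        ((integrable_sq_of_abs_le hS hC).const_mul _)]
    congr 1 with x
    ring
  rw [hmean, hsq, hquad]
  ring
end
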